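/- Let q = 2^m with m ≥ 2. A linear fractional transformation π ∈ PGL_2(GF(q^2)) maps the set U_{q+1} of (q+1)-th roots of unity onto itself if and only if π has one of the following three forms: (I) u ↦ u_0 u with u_0 ∈ U_{q+1}; (II) u ↦ u_0 u^{-1} with u_0 ∈ U_{q+1}; (III) u ↦ (u + c^q u_0)/(cu + u_0) with u_0 ∈ U_{q+1} and c ∈ GF(q^2)* \ U_{q+1}. -/

import Mathlib

/-!
Write `σ` for the involution `x ↦ x ^ q` of `GF(q²)`, so that `U_{q+1} = {u | σ u * u = 1}` and
`σ u = u⁻¹` on `U_{q+1}`. If `f u = (a u + b) / (c u + d)` preserves `U_{q+1}`, clearing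
denominators in `σ (f u) * f u = 1` and substituting `σ u = u⁻¹` gives a quadratic equation in `u`
that holds on all of `U_{q+1}`. As `U_{q+1}` has `q + 1 ≥ 3` points, its three coefficients
`a σb - c σd`, `aσa + bσb - cσc - dσd`, `σa b - σc d` vanish, and these equations force form (I)
when `c = 0`, form (II) when `d = 0`, and form (III) otherwise. Conversely, in form (III) the
numerator and the denominator have the same norm. Characteristic `2` enters only to identify
`a d + b c` with the determinant `a d - b c`.
-/

theorem quadratic_coeffs_eq_zero_of_three_roots {R : Type*} [CommRing R] [NoZeroDivisors R]
    {α β γ x y z : R} (hxy : x ≠ y) (hxz : x ≠ z) (hyz : y ≠ z)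
    (hx : α * x ^ 2 + β * x + γ = 0) (hy : α * y ^ 2 + β * y + γ = 0)
    (hz : α * z ^ 2 + β * z + γ = 0) : α = 0 ∧ β = 0 ∧ γ = 0 := by
  have hxy' : α * (x + y) + β = 0 := by
    have h : (x - y) * (α * (x + y) + β) = 0 := by linear_combination hx - hy
    exact (mul_eq_zero.mp h).resolve_left (sub_ne_zero.mpr hxy)
  have hxz' : α * (x + z) + β = 0 := by
    have h : (x - z) * (α * (x + z) + β) = 0 := by linear_combination hx - hz
    exact (mul_eq_zero.mp h).resolve_left (sub_ne_zero.mpr hxz)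
  have hα : α = 0 := by
    have h : α * (y - z) = 0 := by linear_combination hxy' - hxz'
    exact (mul_eq_zero.mp h).resolve_right (sub_ne_zero.mpr hyz)
  have hβ : β = 0 := by linear_combination hxy' - (x + y) * hα
  exact ⟨hα, hβ, by linear_combination hx - x ^ 2 * hα - x * hβ⟩

theorem FiniteField.exists_isPrimitiveRoot_of_dvd {K : Type*} [Field K] [Fintype K] {n : ℕ}
    (hn : n ∣ Fintype.card K - 1) : ∃ ζ : K, IsPrimitiveRoot ζ n := by
  classical
  obtain ⟨g, hg⟩ := IsCyclic.exists_ofOrder_eq_natCard (α := Kˣ)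
  rw [Nat.card_eq_fintype_card, Fintype.card_units] at hg
  have hgen : IsPrimitiveRoot (g : K) (Fintype.card K - 1) :=
    IsPrimitiveRoot.coe_units_iff.mpr (hg ▸ IsPrimitiveRoot.orderOf g)
  obtain ⟨k, hk⟩ := hn
  have hpos : 0 < Fintype.card K - 1 := by have := Fintype.one_lt_card (α := K); omega
  exact ⟨(g : K) ^ k, hgen.pow hpos (hk.trans (mul_comm _ _))⟩

theorem exists_three_pow_succ_eq_one {F : Type*} [Field F] [Fintype F] {q : ℕ}
    (hF : Fintype.card F = q ^ 2) :
    ∃ x y z : F, x ≠ y ∧ x ≠ z ∧ y ≠ z ∧ x ^ (q + 1) = 1 ∧ y ^ (q + 1) = 1 ∧ z ^ (q + 1) = 1 := by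
  have hq : 1 < q := (Nat.one_lt_pow_iff two_ne_zero).mp (hF ▸ Fintype.one_lt_card)
  obtain ⟨ζ, hζ⟩ : ∃ ζ : F, IsPrimitiveRoot ζ (q + 1) :=
    FiniteField.exists_isPrimitiveRoot_of_dvd ⟨q - 1, by rw [hF]; exact Nat.sq_sub_sq q 1⟩
  have hne : ∀ i j, i < j → j ≤ 2 → ζ ^ i ≠ ζ ^ j := fun i j hij hj h =>
    hij.ne (hζ.pow_inj (by omega) (by omega) h)
  refine ⟨ζ ^ 0, ζ ^ 1, ζ ^ 2, hne 0 1 (by omega) (by omega), hne 0 2 (by omega) le_rfl,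
    hne 1 2 (by omega) le_rfl, ?_, ?_, ?_⟩ <;>
  rw [← pow_mul, mul_comm, pow_mul, hζ.pow_eq_one, one_pow]

section Involution

variable {F : Type*} [Field F] {σ : F →+* F}

theorem norm_div_eq_one_iff {x y : F} (hy : y ≠ 0) :
    σ (x / y) * (x / y) = 1 ↔ σ x * x = σ y * y := by
  rw [map_div₀, div_mul_div_comm, div_eq_one_iff_eq (mul_ne_zero ((map_ne_zero σ).2 hy) hy)]

theorem quadratic_eq_zero_of_norm_div_eq_one {a b c d u : F} (hu : σ u * u = 1)
    (h : σ ((a * u + b) / (c * u + d)) * ((a * u + b) / (c * u + d)) = 1) :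
    (a * σ b - c * σ d) * u ^ 2 + (a * σ a + b * σ b - c * σ c - d * σ d) * u
      + (σ a * b - σ c * d) = 0 := by
  have hden : c * u + d ≠ 0 := by
    rintro hzero
    simp [hzero] at h
  rw [norm_div_eq_one_iff hden] at h
  simp only [map_add, map_mul] at h
  -- multiplying by `u` turns `σ u` into `u⁻¹`
  linear_combination u * h + (σ c * (c * u + d) - σ a * (a * u + b)) * hu

theorem norm_div_eq_one_of_norm_ne_one (hσ : Function.Involutive σ) {u u₀ c : F}
    (hu : σ u * u = 1) (hu₀ : σ u₀ * u₀ = 1) (hc : σ c * c ≠ 1) :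
    σ ((u + σ c * u₀) / (c * u + u₀)) * ((u + σ c * u₀) / (c * u + u₀)) = 1 := by
  have hden : c * u + u₀ ≠ 0 := by
    intro hzero
    have hzero' : σ c * σ u + σ u₀ = 0 := by simpa using congrArg σ hzero
    apply hc
    linear_combination -(σ c * c) * hu + (σ c * σ u) * hzero - u₀ * hzero' + hu₀
  rw [norm_div_eq_one_iff hden]
  simp only [map_add, map_mul, hσ c]
  linear_combination (1 - c * σ c) * (hu - hu₀)

theorem mobius_forms_of_coeffs_eq_zero {a b c d : F} (hdet : a * d - b * c ≠ 0)
    (hα : a * σ b - c * σ d = 0) (hβ : a * σ a + b * σ b - c * σ c - d * σ d = 0)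
    (hγ : σ a * b - σ c * d = 0) :
    (∃ u₀ : F, σ u₀ * u₀ = 1 ∧ ∀ u : F, σ u * u = 1 → (a * u + b) / (c * u + d) = u₀ * u) ∨
    (∃ u₀ : F, σ u₀ * u₀ = 1 ∧ ∀ u : F, σ u * u = 1 → (a * u + b) / (c * u + d) = u₀ * u⁻¹) ∨
    (∃ u₀ c' : F, σ u₀ * u₀ = 1 ∧ c' ≠ 0 ∧ σ c' * c' ≠ 1 ∧ ∀ u : F, σ u * u = 1 →
        (a * u + b) / (c * u + d) = (u + σ c' * u₀) / (c' * u + u₀)) := by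
  rcases eq_or_ne c 0 with rfl | hc
  · obtain ⟨ha, hd⟩ : a ≠ 0 ∧ d ≠ 0 := by simpa using hdet
    obtain rfl : b = 0 := by simpa [ha] using hα
    refine Or.inl ⟨a / d, (norm_div_eq_one_iff hd).2 ?_, fun u _ => by ring⟩
    linear_combination (by simpa using hβ : a * σ a - d * σ d = 0)
  rcases eq_or_ne d 0 with rfl | hd
  · obtain ⟨hb, -⟩ : b ≠ 0 ∧ c ≠ 0 := by simpa using hdet
    obtain rfl : a = 0 := by simpa [hb] using hγ
    refine Or.inr <| Or.inl ⟨b / c, (norm_div_eq_one_iff hc).2 ?_, fun u _ => by ring⟩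
    linear_combination (by simpa using hβ : b * σ b - c * σ c = 0)
  have ha : a ≠ 0 := by
    rintro rfl
    simp_all
  have hAC : σ a * a - σ c * c ≠ 0 := fun h => by
    have hdet' : σ a * (a * d - b * c) = 0 := by linear_combination d * h - c * hγ
    exact hdet ((mul_eq_zero.mp hdet').resolve_left ((map_ne_zero σ).2 ha))
  have hAD : σ a * a - σ d * d = 0 := by
    have h : (σ a * a - σ c * c) * (σ a * a - σ d * d) = 0 := by
      linear_combination (σ a * a) * hβ - (a * σ b) * hγ - (σ c * d) * hα
    exact (mul_eq_zero.mp h).resolve_left hAC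
  refine Or.inr <| Or.inr ⟨d / a, c / a, (norm_div_eq_one_iff ha).2 ?_, div_ne_zero hc ha,
    fun h => hAC ?_, fun u _ => ?_⟩
  · linear_combination -hAD
  · linear_combination -((norm_div_eq_one_iff ha).1 h)
  · have hnum : u + σ (c / a) * (d / a) = (a * u + b) / a := by
      have hσa : σ a ≠ 0 := (map_ne_zero σ).2 ha
      rw [map_div₀]
      field_simp
      linear_combination -hγ
    rw [hnum, show c / a * u + d / a = (c * u + d) / a by ring, div_div_div_cancel_right₀ ha]

theorem norm_mobius_eq_one_iff (hσ : Function.Involutive σ)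
    (hU : ∃ x y z : F, x ≠ y ∧ x ≠ z ∧ y ≠ z ∧ σ x * x = 1 ∧ σ y * y = 1 ∧ σ z * z = 1)
    {a b c d : F} (hdet : a * d - b * c ≠ 0) :
    (∀ u : F, σ u * u = 1 → σ ((a * u + b) / (c * u + d)) * ((a * u + b) / (c * u + d)) = 1) ↔
      ((∃ u₀ : F, σ u₀ * u₀ = 1 ∧
          ∀ u : F, σ u * u = 1 → (a * u + b) / (c * u + d) = u₀ * u) ∨
       (∃ u₀ : F, σ u₀ * u₀ = 1 ∧
          ∀ u : F, σ u * u = 1 → (a * u + b) / (c * u + d) = u₀ * u⁻¹) ∨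
       (∃ u₀ c' : F, σ u₀ * u₀ = 1 ∧ c' ≠ 0 ∧ σ c' * c' ≠ 1 ∧
          ∀ u : F, σ u * u = 1 →
            (a * u + b) / (c * u + d) = (u + σ c' * u₀) / (c' * u + u₀))) := by
  constructor
  · intro H
    obtain ⟨x, y, z, hxy, hxz, hyz, hx, hy, hz⟩ := hU
    obtain ⟨hα, hβ, hγ⟩ := quadratic_coeffs_eq_zero_of_three_roots hxy hxz hyz
      (quadratic_eq_zero_of_norm_div_eq_one hx (H x hx))
      (quadratic_eq_zero_of_norm_div_eq_one hy (H y hy))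
      (quadratic_eq_zero_of_norm_div_eq_one hz (H z hz))
    exact mobius_forms_of_coeffs_eq_zero hdet hα hβ hγ
  · rintro (⟨u₀, hu₀, hf⟩ | ⟨u₀, hu₀, hf⟩ | ⟨u₀, c', hu₀, -, hc', hf⟩) u hu <;> rw [hf u hu]
    · rw [map_mul]
      linear_combination (σ u * u) * hu₀ + hu
    · rw [map_mul, map_inv₀, mul_mul_mul_comm, ← mul_inv, hu₀, hu, inv_one, one_mul]
    · exact norm_div_eq_one_of_norm_ne_one hσ hu hu₀ hc'

end Involution

theorem stmt4_general (m q : ℕ) (hq : q = 2 ^ m) (F : Type*) [Field F] [Fintype F]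
    (hF : Fintype.card F = q ^ 2) (a b c d : F) (hdet : a * d + b * c ≠ 0) :
    (∀ u : F, u ^ (q + 1) = 1 → ((a * u + b) / (c * u + d)) ^ (q + 1) = 1) ↔
      ((∃ u₀ : F, u₀ ^ (q + 1) = 1 ∧
          ∀ u : F, u ^ (q + 1) = 1 → (a * u + b) / (c * u + d) = u₀ * u) ∨
       (∃ u₀ : F, u₀ ^ (q + 1) = 1 ∧
          ∀ u : F, u ^ (q + 1) = 1 → (a * u + b) / (c * u + d) = u₀ * u⁻¹) ∨
       (∃ u₀ c' : F, u₀ ^ (q + 1) = 1 ∧ c' ≠ 0 ∧ c' ^ (q + 1) ≠ 1 ∧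
          ∀ u : F, u ^ (q + 1) = 1 →
            (a * u + b) / (c * u + d) = (u + c' ^ q * u₀) / (c' * u + u₀))) := by
  have hU := exists_three_pow_succ_eq_one hF
  subst hq
  have hm : m ≠ 0 := by
    rintro rfl
    simpa [hF] using Fintype.one_lt_card (α := F)
  have : CharP F 2 := ringChar.eq_iff.mp <| FiniteField.even_card_iff_char_two.mpr <| by
    simp [hF, Nat.pow_mod, hm]
  obtain ⟨σ, hσ⟩ : ∃ σ : F →+* F, ∀ x, σ x = x ^ 2 ^ m :=
    ⟨iterateFrobenius F 2 m, iterateFrobenius_def 2 m⟩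
  have hinv : Function.Involutive σ := fun x => by
    rw [hσ, hσ, ← pow_mul, ← sq, ← hF, FiniteField.pow_card]
  simp only [pow_succ, ← hσ] at hU ⊢
  exact norm_mobius_eq_one_iff hinv hU (by rwa [CharTwo.sub_eq_add])

/-- Let `q = 2^m` with `m ≥ 2`. A linear fractional transformation of `PGL_2(GF(q^2))`
maps `U_{q+1}` onto itself iff it has one of the three forms (I), (II), (III). -/
theorem stmt4 (m q : ℕ) (hm : 2 ≤ m) (hq : q = 2 ^ m) (F : Type*) [Field F] [Fintype F]
    (hF : Fintype.card F = q ^ 2) (a b c d : F) (hdet : a * d + b * c ≠ 0) :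
    (∀ u : F, u ^ (q + 1) = 1 → ((a * u + b) / (c * u + d)) ^ (q + 1) = 1) ↔
      ((∃ u₀ : F, u₀ ^ (q + 1) = 1 ∧
          ∀ u : F, u ^ (q + 1) = 1 → (a * u + b) / (c * u + d) = u₀ * u) ∨
       (∃ u₀ : F, u₀ ^ (q + 1) = 1 ∧
          ∀ u : F, u ^ (q + 1) = 1 → (a * u + b) / (c * u + d) = u₀ * u⁻¹) ∨
       (∃ u₀ c' : F, u₀ ^ (q + 1) = 1 ∧ c' ≠ 0 ∧ c' ^ (q + 1) ≠ 1 ∧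
          ∀ u : F, u ^ (q + 1) = 1 →
            (a * u + b) / (c * u + d) = (u + c' ^ q * u₀) / (c' * u + u₀))) :=
  stmt4_general m q hq F hF a b c d hdet
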